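/- arXiv:2410.19975 — 2 statements merged into one kernel-verified Lean document; each statement's English description precedes it below -/
import Mathlib

section
/- Under the dual-system correspondence (reversed and inverted dynamics with Q̄_{N-k-1} = Φ_{k+1,k}^{-1} Q_k Φ_{k+1,k}^{-T}, C̄_{N-k} = C_k, R̄_{N-k} = R_k), the w-step stochastic constructability Gramian of the dual system equals the w-step stochastic observability Gramian of the original system: F̄↑_w = F↓_w. -/
open Matrix Finset

/-- `stm Φ j d` is the state transition matrix `Φ_{j+d, j}` built from the
one-step matrices `Φ k = Φ_{k+1,k}`. -/
def stm {n : ℕ} (Φ : ℕ → Matrix (Fin n) (Fin n) ℝ) (j : ℕ) : ℕ → Matrix (Fin n) (Fin n) ℝ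
  | 0 => 1
  | d + 1 => Φ (j + d) * stm Φ j d

/-- The observability matrix over `w = N+1` steps, stacking `C k Φ_{k,0}`. -/
def obsMat {n p : ℕ} (Φ : ℕ → Matrix (Fin n) (Fin n) ℝ) (C : ℕ → Matrix (Fin p) (Fin n) ℝ)
    (N : ℕ) : Matrix (Fin (N + 1) × Fin p) (Fin n) ℝ :=
  fun i c => (C (i.1 : ℕ) * stm Φ 0 (i.1 : ℕ)) i.2 c

/-- The constructability matrix over `w = N+1` steps, stacking `C_{N-τ} Φ_{N,N-τ}⁻¹`. -/
noncomputable def consMat {n p : ℕ} (Φ : ℕ → Matrix (Fin n) (Fin n) ℝ)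
    (C : ℕ → Matrix (Fin p) (Fin n) ℝ) (N : ℕ) : Matrix (Fin (N + 1) × Fin p) (Fin n) ℝ :=
  fun i c => (C (N - (i.1 : ℕ)) * (stm Φ (N - (i.1 : ℕ)) (i.1 : ℕ))⁻¹) i.2 c

/-- Forward block lower-triangular output-propagation matrix. -/
def Mmat {n p : ℕ} (Φ : ℕ → Matrix (Fin n) (Fin n) ℝ)
    (C : ℕ → Matrix (Fin p) (Fin n) ℝ) (m : ℕ) :
    Matrix (Fin (m + 1) × Fin p) (Fin m × Fin n) ℝ :=
  fun i j =>
    if (j.1 : ℕ) < (i.1 : ℕ) then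
      (C (i.1 : ℕ) * stm Φ ((j.1 : ℕ) + 1) ((i.1 : ℕ) - ((j.1 : ℕ) + 1))) i.2 j.2
    else 0

/-- Reverse-time block lower-triangular output-propagation matrix. -/
noncomputable def Mcmat {n p : ℕ} (Φ : ℕ → Matrix (Fin n) (Fin n) ℝ)
    (C : ℕ → Matrix (Fin p) (Fin n) ℝ) (N : ℕ) :
    Matrix (Fin (N + 1) × Fin p) (Fin N × Fin n) ℝ :=
  fun i j =>
    if (j.1 : ℕ) < (i.1 : ℕ) then
      (C (N - (i.1 : ℕ)) * (stm Φ (N - (i.1 : ℕ)) ((i.1 : ℕ) - (j.1 : ℕ)))⁻¹) i.2 j.2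
    else 0

/-- Forward block diagonal `blkdiag (R 0, …, R N)`. -/
def blkR {p : ℕ} (R : ℕ → Matrix (Fin p) (Fin p) ℝ) (N : ℕ) :
    Matrix (Fin (N + 1) × Fin p) (Fin (N + 1) × Fin p) ℝ :=
  fun i j => if i.1 = j.1 then R (i.1 : ℕ) i.2 j.2 else 0

/-- Reverse block diagonal `blkdiag (R N, …, R 0)`. -/
def blkRrev {p : ℕ} (R : ℕ → Matrix (Fin p) (Fin p) ℝ) (N : ℕ) :
    Matrix (Fin (N + 1) × Fin p) (Fin (N + 1) × Fin p) ℝ :=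
  fun i j => if i.1 = j.1 then R (N - (i.1 : ℕ)) i.2 j.2 else 0

/-- Forward block diagonal `blkdiag (Q 0, …, Q (N-1))`. -/
def blkQ {n : ℕ} (Q : ℕ → Matrix (Fin n) (Fin n) ℝ) (m : ℕ) :
    Matrix (Fin m × Fin n) (Fin m × Fin n) ℝ :=
  fun i j => if i.1 = j.1 then Q (i.1 : ℕ) i.2 j.2 else 0

/-- Reverse block diagonal `blkdiag (Q (N-1), …, Q 0)`. -/
def blkQrev {n : ℕ} (Q : ℕ → Matrix (Fin n) (Fin n) ℝ) (N : ℕ) :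
    Matrix (Fin N × Fin n) (Fin N × Fin n) ℝ :=
  fun i j => if i.1 = j.1 then Q (N - 1 - (i.1 : ℕ)) i.2 j.2 else 0

/-- The `w`-step stochastic observability Gramian (`w = N+1`):
`F↓ = Oᵀ (R̃↘)⁻¹ O` with `R̃↘ = blkdiag(R) + M Q Mᵀ`. -/
noncomputable def obsGram {n p : ℕ} (Φ : ℕ → Matrix (Fin n) (Fin n) ℝ)
    (C : ℕ → Matrix (Fin p) (Fin n) ℝ) (Q : ℕ → Matrix (Fin n) (Fin n) ℝ)
    (R : ℕ → Matrix (Fin p) (Fin p) ℝ) (N : ℕ) : Matrix (Fin n) (Fin n) ℝ :=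
  (obsMat Φ C N)ᵀ * (blkR R N + Mmat Φ C N * blkQ Q N * (Mmat Φ C N)ᵀ)⁻¹ * obsMat Φ C N

/-- The `w`-step stochastic constructability Gramian (`w = N+1`):
`F↑ = O_cᵀ (R̃↖)⁻¹ O_c` with `R̃↖ = blkdiag(R, reversed) + M_c Q_rev M_cᵀ`. -/
noncomputable def consGram {n p : ℕ} (Φ : ℕ → Matrix (Fin n) (Fin n) ℝ)
    (C : ℕ → Matrix (Fin p) (Fin n) ℝ) (Q : ℕ → Matrix (Fin n) (Fin n) ℝ)
    (R : ℕ → Matrix (Fin p) (Fin p) ℝ) (N : ℕ) : Matrix (Fin n) (Fin n) ℝ :=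
  (consMat Φ C N)ᵀ * (blkRrev R N + Mcmat Φ C N * blkQrev Q N * (Mcmat Φ C N)ᵀ)⁻¹ *
    consMat Φ C N

section Aux

variable {n p : ℕ}

lemma stm_succ_left (Φ : ℕ → Matrix (Fin n) (Fin n) ℝ) (a d : ℕ) :
    stm Φ a (d + 1) = stm Φ (a + 1) d * Φ a := by
  induction d with
  | zero => simp [stm]
  | succ d ih =>
    show Φ (a + (d + 1)) * stm Φ a (d + 1) = stm Φ (a + 1) (d + 1) * Φ a
    rw [ih, show a + (d + 1) = (a + 1) + d by omega, ← Matrix.mul_assoc]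
    rfl

lemma stm_det_isUnit {Φ : ℕ → Matrix (Fin n) (Fin n) ℝ}
    (hΦ : ∀ k, IsUnit (Φ k).det) (a d : ℕ) : IsUnit (stm Φ a d).det := by
  induction d with
  | zero => simp [stm]
  | succ d ih =>
    show IsUnit (Φ (a + d) * stm Φ a d).det
    rw [Matrix.det_mul]
    exact (hΦ _).mul ih

lemma dual_stm {N : ℕ} {Φ Φb : ℕ → Matrix (Fin n) (Fin n) ℝ}
    (hΦ : ∀ k, k < N → Φb (N - 1 - k) = (Φ k)⁻¹) :
    ∀ d a, a + d ≤ N → stm Φb (N - (a + d)) d = (stm Φ a d)⁻¹ := by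
  intro d
  induction d with
  | zero => intro a _; simp [stm]
  | succ d ih =>
    intro a h
    show Φb (N - (a + (d + 1)) + d) * stm Φb (N - (a + (d + 1))) d = _
    rw [show N - (a + (d + 1)) + d = N - 1 - a by omega,
        show N - (a + (d + 1)) = N - ((a + 1) + d) by omega,
        ih (a + 1) (by omega), hΦ a (by omega), stm_succ_left,
        Matrix.mul_inv_rev]

/-- Block diagonal matrix. -/
def bd {N : ℕ} (f : ℕ → Matrix (Fin n) (Fin n) ℝ) :
    Matrix (Fin N × Fin n) (Fin N × Fin n) ℝ :=
  fun i j => if i.1 = j.1 then f (i.1 : ℕ) i.2 j.2 else 0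

lemma bd_mul {N : ℕ} (f g : ℕ → Matrix (Fin n) (Fin n) ℝ) :
    (bd (N := N) f) * (bd (N := N) g) = bd (N := N) (fun k => f k * g k) := by
  funext i j
  rcases i with ⟨a, x⟩
  rcases j with ⟨b, y⟩
  simp only [Matrix.mul_apply, bd, Fintype.sum_prod_type, ite_mul, mul_ite,
    zero_mul, mul_zero]
  by_cases hab : a = b
  · subst hab
    simp [Finset.sum_ite_eq, Matrix.mul_apply]
  · simp [hab, Finset.sum_ite_eq]

lemma bd_transpose {N : ℕ} (f : ℕ → Matrix (Fin n) (Fin n) ℝ) :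
    (bd (N := N) f)ᵀ = bd (N := N) (fun k => (f k)ᵀ) := by
  funext i j
  rcases i with ⟨a, x⟩
  rcases j with ⟨b, y⟩
  simp only [Matrix.transpose_apply, bd]
  by_cases hab : a = b
  · subst hab; simp
  · simp [hab, Ne.symm hab]

lemma bd_congr {N : ℕ} {f g : ℕ → Matrix (Fin n) (Fin n) ℝ}
    (h : ∀ k : Fin N, f (k : ℕ) = g (k : ℕ)) : bd (N := N) f = bd (N := N) g := by
  funext i j
  rcases i with ⟨a, x⟩
  rcases j with ⟨b, y⟩
  simp only [bd]
  by_cases hab : a = b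
  · subst hab; rw [h a]
  · simp [hab]

end Aux

/-- Under the dual-system correspondence
`Φ̄_{N-k,N-k-1} = Φ_{k+1,k}⁻¹`, `C̄_{N-k} = C_k`,
`Q̄_{N-k-1} = Φ_{k+1,k}⁻¹ Q_k Φ_{k+1,k}⁻ᵀ`, `R̄_{N-k} = R_k`, the `w`-step
stochastic constructability Gramian of the dual system equals the `w`-step
stochastic observability Gramian of the original system: `F̄↑_w = F↓_w`. -/
theorem dual_constructability_gramian_eq_observability_gramian
    {n p : ℕ} (Φ Φb : ℕ → Matrix (Fin n) (Fin n) ℝ)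
    (C Cb : ℕ → Matrix (Fin p) (Fin n) ℝ)
    (Q Qb : ℕ → Matrix (Fin n) (Fin n) ℝ)
    (R Rb : ℕ → Matrix (Fin p) (Fin p) ℝ) (N : ℕ)
    (hΦinv : ∀ k, IsUnit (Φ k).det)
    (hQpos : ∀ k, (Q k).PosDef) (hRpos : ∀ k, (R k).PosDef)
    (hΦ : ∀ k, k < N → Φb (N - 1 - k) = (Φ k)⁻¹)
    (hC : ∀ k, k ≤ N → Cb (N - k) = C k)
    (hQ : ∀ k, k < N → Qb (N - 1 - k) = (Φ k)⁻¹ * Q k * ((Φ k)⁻¹)ᵀ)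
    (hR : ∀ k, k ≤ N → Rb (N - k) = R k) :
    consGram Φb Cb Qb Rb N = obsGram Φ C Q R N := by
  -- The constructability matrix of the dual equals the observability matrix.
  have hO : consMat Φb Cb N = obsMat Φ C N := by
    funext i c
    rcases i with ⟨i, r⟩
    have hi : (i : ℕ) ≤ N := by omega
    simp only [consMat, obsMat]
    rw [hC _ hi]
    have hd := dual_stm hΦ (i : ℕ) 0 (by omega)
    simp only [Nat.zero_add] at hd
    rw [hd, Matrix.nonsing_inv_nonsing_inv _ (stm_det_isUnit hΦinv 0 (i : ℕ))]
  -- reverse block diag of Rb equals forward block diag of R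
  have hRR : blkRrev Rb N = blkR R N := by
    funext i j
    rcases i with ⟨a, x⟩
    rcases j with ⟨b, y⟩
    simp only [blkRrev, blkR]
    by_cases hab : a = b
    · subst hab
      rw [hR _ (by omega)]
    · simp [hab]
  -- Mcmat of dual = Mmat * blockdiag Φ
  have hMc : Mcmat Φb Cb N = Mmat Φ C N * bd (N := N) Φ := by
    funext i j
    rcases i with ⟨i, r⟩
    rcases j with ⟨b, y⟩
    have hi : (i : ℕ) ≤ N := by omega
    have hrhs : (Mmat Φ C N * bd (N := N) Φ) (i, r) (b, y) =
        ∑ x : Fin n, Mmat Φ C N (i, r) (b, x) * Φ (b : ℕ) x y := by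
      simp only [Matrix.mul_apply, Fintype.sum_prod_type, bd, mul_ite, mul_zero]
      rw [Finset.sum_comm]
      simp [Finset.sum_ite_eq]
    rw [hrhs]
    by_cases hbi : (b : ℕ) < (i : ℕ)
    · have hMm : ∀ x : Fin n, Mmat Φ C N (i, r) (b, x) =
          (C (i : ℕ) * stm Φ ((b : ℕ) + 1) ((i : ℕ) - ((b : ℕ) + 1))) r x := by
        intro x; simp [Mmat, hbi]
      simp only [hMm]
      have : ∑ x : Fin n,
          (C (i : ℕ) * stm Φ ((b : ℕ) + 1) ((i : ℕ) - ((b : ℕ) + 1))) r x * Φ (b : ℕ) x y =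
          (C (i : ℕ) * stm Φ ((b : ℕ) + 1) ((i : ℕ) - ((b : ℕ) + 1)) * Φ (b : ℕ)) r y := by
        rw [Matrix.mul_apply]
      rw [this]
      have hkey : C (i : ℕ) * stm Φ ((b : ℕ) + 1) ((i : ℕ) - ((b : ℕ) + 1)) * Φ (b : ℕ) =
          C (i : ℕ) * stm Φ (b : ℕ) ((i : ℕ) - (b : ℕ)) := by
        rw [show (i : ℕ) - (b : ℕ) = ((i : ℕ) - ((b : ℕ) + 1)) + 1 by omega,
          stm_succ_left, ← Matrix.mul_assoc]
      rw [hkey]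
      simp only [Mcmat, hbi, if_true]
      rw [hC _ hi]
      have hd := dual_stm hΦ ((i : ℕ) - (b : ℕ)) (b : ℕ) (by omega)
      rw [show (b : ℕ) + ((i : ℕ) - (b : ℕ)) = (i : ℕ) by omega] at hd
      rw [hd, Matrix.nonsing_inv_nonsing_inv _ (stm_det_isUnit hΦinv _ _)]
    · simp only [Mcmat, Mmat, hbi, if_false]
      simp
  -- middle identity: bd Φ * blkQrev Qb N * (bd Φ)ᵀ = blkQ Q N
  have hQrev : blkQrev Qb N = bd (N := N) (fun k => Qb (N - 1 - k)) := rfl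
  have hQfwd : blkQ Q N = bd (N := N) Q := rfl
  have hQmid : bd (N := N) Φ * blkQrev Qb N * (bd (N := N) Φ)ᵀ = blkQ Q N := by
    rw [hQrev, hQfwd, bd_transpose, bd_mul, bd_mul]
    apply bd_congr
    intro k
    rw [hQ _ k.isLt]
    have h1 : Φ (k : ℕ) * ((Φ (k : ℕ))⁻¹ * Q (k : ℕ) * ((Φ (k : ℕ))⁻¹)ᵀ) * (Φ (k : ℕ))ᵀ
        = (Φ (k : ℕ) * (Φ (k : ℕ))⁻¹) * Q (k : ℕ) * ((Φ (k : ℕ))⁻¹ᵀ * (Φ (k : ℕ))ᵀ) := by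
      noncomm_ring
    rw [h1, ← Matrix.transpose_mul, Matrix.mul_nonsing_inv _ (hΦinv _)]
    simp
  have hMQ : Mcmat Φb Cb N * blkQrev Qb N * (Mcmat Φb Cb N)ᵀ =
      Mmat Φ C N * blkQ Q N * (Mmat Φ C N)ᵀ := by
    rw [hMc, Matrix.transpose_mul, ← hQmid]
    simp only [Matrix.mul_assoc]
  rw [consGram, obsGram, hO, hRR, hMQ]
end

section
/- The sequence F_1 = C^T R^{-1} C, F_{k+1} = G(F_k) with G(F) = -Φ^T Q^{-1}(F + Q^{-1})^{-1} Q^{-1} Φ + Φ^T Q^{-1} Φ + C^T R^{-1} C is monotonically non-decreasing in the Loewner order: F_k ⪯ F_{k+1} for all k ≥ 1. -/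
/-!
Writing `G(F) = (Q⁻¹Φ)ᵀ (Q - (F + Q⁻¹)⁻¹) (Q⁻¹Φ) + Cᵀ R⁻¹ C`, antitonicity of matrix inversion
on positive definite matrices makes `G` monotone on positive semidefinite matrices and gives
`G(F) ⪰ Cᵀ R⁻¹ C = F₁`; induction then propagates `F_k ⪯ F_{k+1}`.
-/

open Matrix
open scoped MatrixOrder ComplexOrder

/-- The Riccati-type map
`G(F) = -Φᵀ Q⁻¹ (F + Q⁻¹)⁻¹ Q⁻¹ Φ + Φᵀ Q⁻¹ Φ + Cᵀ R⁻¹ C`. -/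
noncomputable def riccatiMap {n p : ℕ} (Φ Q : Matrix (Fin n) (Fin n) ℝ)
    (C : Matrix (Fin p) (Fin n) ℝ) (R : Matrix (Fin p) (Fin p) ℝ)
    (F : Matrix (Fin n) (Fin n) ℝ) : Matrix (Fin n) (Fin n) ℝ :=
  -(Φᵀ * Q⁻¹ * (F + Q⁻¹)⁻¹ * Q⁻¹ * Φ) + Φᵀ * Q⁻¹ * Φ + Cᵀ * R⁻¹ * C

theorem Matrix.PosDef.inv_le_inv {𝕜 : Type*} [RCLike 𝕜] {m : Type*} [Fintype m] [DecidableEq m]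
    {A B : Matrix m m 𝕜} (hA : A.PosDef) (hAB : A ≤ B) : B⁻¹ ≤ A⁻¹ := by
  have hB : B.PosDef := by simpa using hA.add_posSemidef (le_iff.mp hAB)
  let := hA.isUnit.invertible
  let := hB.isUnit.invertible
  -- The Schur complements of `[[B, 1], [1, A⁻¹]]` are `B - A` and `A⁻¹ - B⁻¹`.
  have hBlock := (PosDef.fromBlocks₂₂ B (1 : Matrix m m 𝕜) hA.inv).mpr
    (by simpa [inv_inv_of_invertible] using le_iff.mp hAB)
  simpa [le_iff] using (PosDef.fromBlocks₁₁ (1 : Matrix m m 𝕜) A⁻¹ hB).mp hBlock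

section Riccati

variable {n p : ℕ} {Φ Q : Matrix (Fin n) (Fin n) ℝ} {C : Matrix (Fin p) (Fin n) ℝ}
  {R : Matrix (Fin p) (Fin p) ℝ}

theorem riccatiMap_eq_conj (hQ : Q.IsHermitian) (hQu : IsUnit Q)
    (F : Matrix (Fin n) (Fin n) ℝ) :
    riccatiMap Φ Q C R F = star (Q⁻¹ * Φ) * (Q - (F + Q⁻¹)⁻¹) * (Q⁻¹ * Φ) + Cᵀ * R⁻¹ * C := by
  have hQinv : star Q⁻¹ = Q⁻¹ := hQ.inv
  have hQQ : Q⁻¹ * Q * Q⁻¹ = Q⁻¹ := by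
    rw [nonsing_inv_mul Q (Q.isUnit_iff_isUnit_det.mp hQu), one_mul]
  rw [star_mul, hQinv, star_eq_conjTranspose, conjTranspose_eq_transpose_of_trivial, riccatiMap]
  calc _ = Φᵀ * (Q⁻¹ * Q * Q⁻¹) * Φ - Φᵀ * Q⁻¹ * (F + Q⁻¹)⁻¹ * Q⁻¹ * Φ + Cᵀ * R⁻¹ * C := by
        rw [hQQ]; noncomm_ring
    _ = _ := by noncomm_ring

theorem riccatiMap_monotoneOn (hQ : Q.PosDef) : MonotoneOn (riccatiMap Φ Q C R) (Set.Ici 0) := by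
  intro F hF F' _ hFF'
  have hinv : (F' + Q⁻¹)⁻¹ ≤ (F + Q⁻¹)⁻¹ :=
    (hQ.inv.posSemidef_add hF.posSemidef).inv_le_inv (add_le_add_left hFF' _)
  have hconj := star_left_conjugate_le_conjugate (sub_le_sub_left hinv Q) (Q⁻¹ * Φ)
  rw [riccatiMap_eq_conj hQ.isHermitian hQ.isUnit, riccatiMap_eq_conj hQ.isHermitian hQ.isUnit]
  exact add_le_add_left hconj _

theorem le_riccatiMap (hQ : Q.PosDef) {F : Matrix (Fin n) (Fin n) ℝ} (hF : 0 ≤ F) :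
    Cᵀ * R⁻¹ * C ≤ riccatiMap Φ Q C R F := by
  have hinv : (F + Q⁻¹)⁻¹ ≤ Q := by
    simpa [nonsing_inv_nonsing_inv Q (Q.isUnit_iff_isUnit_det.mp hQ.isUnit)] using
      hQ.inv.inv_le_inv (le_add_of_nonneg_left hF)
  rw [riccatiMap_eq_conj hQ.isHermitian hQ.isUnit]
  exact le_add_of_nonneg_left (star_left_conjugate_nonneg (sub_nonneg.mpr hinv) _)

end Riccati

/-- The sequence `F₁ = Cᵀ R⁻¹ C`, `F_{k+1} = G(F_k)` is
monotonically non-decreasing in the Loewner order: `F_k ⪯ F_{k+1}` for all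
`k ≥ 1`. -/
theorem riccati_iterates_monotone
    {n p : ℕ} (Φ Q : Matrix (Fin n) (Fin n) ℝ) (C : Matrix (Fin p) (Fin n) ℝ)
    (R : Matrix (Fin p) (Fin p) ℝ) (hQ : Q.PosDef) (hR : R.PosDef)
    (F : ℕ → Matrix (Fin n) (Fin n) ℝ)
    (hF1 : F 1 = Cᵀ * R⁻¹ * C)
    (hFrec : ∀ k, 1 ≤ k → F (k + 1) = riccatiMap Φ Q C R (F k)) :
    ∀ k, 1 ≤ k → (F (k + 1) - F k).PosSemidef := by
  suffices h : ∀ k, 1 ≤ k → 0 ≤ F k ∧ F k ≤ F (k + 1) from fun k hk => le_iff.mp (h k hk).2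
  intro k hk
  induction k, hk using Nat.le_induction with
  | base =>
    have hF1_nonneg : 0 ≤ F 1 := by
      simpa [hF1, conjTranspose_eq_transpose_of_trivial] using
        (hR.inv.posSemidef.conjTranspose_mul_mul_same C).nonneg
    refine ⟨hF1_nonneg, ?_⟩
    rw [hFrec 1 le_rfl]
    nth_rewrite 1 [hF1]
    exact le_riccatiMap hQ hF1_nonneg
  | succ k hk ih =>
    obtain ⟨hFk, hle⟩ := ih
    refine ⟨hFk.trans hle, ?_⟩
    rw [hFrec (k + 1) (by omega)]
    nth_rewrite 1 [hFrec k hk]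
    exact riccatiMap_monotoneOn hQ hFk (hFk.trans hle) hle
end
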